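/- arXiv:2310.05246 — 2 statements merged into one kernel-verified Lean document; each statement's English description precedes it below -/
import Mathlib

section
/- For any single-qubit density operator ρ (positive semidefinite 2×2 matrix with trace 1), the quantity (1/2)·(tr(|+₀⟩⟨+₀| ρ) + tr(|+₂⟩⟨+₂| ρ)) is at most cos²(π/8), where |+θ⟩ = (|0⟩ + e^{iθπ/4}|1⟩)/√2. -/
/-!
Averaging the two projectors gives `M = ½(|+₀⟩⟨+₀| + |+₂⟩⟨+₂|) = ¼[[2, 1 - i], [1 + i, 2]]`,
whose eigenvalues are `(2 ± √2)/4`. Hence `cos²(π/8) · 1 - M` is the rank-one positive operator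
`(√2/4) |u⟩⟨u|` with `u = (1, -(1 + i)/√2)`, and `tr(|u⟩⟨u| ρ) = ⟨u|ρ|u⟩ ≥ 0` for every
positive semidefinite `ρ`; with `tr ρ = 1` this gives `tr(M ρ) ≤ cos²(π/8)`.
-/

open scoped Matrix ComplexOrder

noncomputable def plusVec (θ : ℕ) : Fin 2 → ℂ :=
  fun i => if i = 0 then 1 / Real.sqrt 2
    else Complex.exp (Complex.I * θ * Real.pi / 4) / Real.sqrt 2

noncomputable def projOf (v : Fin 2 → ℂ) : Matrix (Fin 2) (Fin 2) ℂ :=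
  fun i j => v i * (starRingEnd ℂ) (v j)

open Matrix Complex

theorem trace_vecMulVec_star_mul_nonneg {n R : Type*} [Fintype n] [CommRing R] [PartialOrder R]
    [StarRing R] [StarOrderedRing R] (v : n → R) {ρ : Matrix n n R} (hρ : ρ.PosSemidef) :
    0 ≤ (vecMulVec v (star v) * ρ).trace := by
  rw [vecMulVec_mul, trace_vecMulVec, dotProduct_comm, ← dotProduct_mulVec]
  exact hρ.dotProduct_mulVec_nonneg v

theorem re_trace_mul_le_of_eq_smul_one_sub {n : Type*} [Fintype n] [DecidableEq n]
    {M ρ : Matrix n n ℂ} (hρ : ρ.PosSemidef) (htr : ρ.trace = 1) {c t : ℝ} (ht : 0 ≤ t)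
    (u : n → ℂ) (hM : M = (c : ℂ) • 1 - (t : ℂ) • vecMulVec u (star u)) :
    (M * ρ).trace.re ≤ c := by
  have hu := (nonneg_iff.mp (trace_vecMulVec_star_mul_nonneg u hρ)).1
  rw [hM, sub_mul, smul_mul, smul_mul, one_mul, trace_sub, trace_smul, trace_smul, htr]
  simp only [smul_eq_mul, sub_re, mul_re, ofReal_re, ofReal_im, zero_mul, sub_zero, mul_one]
  linarith [mul_nonneg ht hu]

theorem plusVec_zero : plusVec 0 = ![1 / ((√2 : ℝ) : ℂ), 1 / ((√2 : ℝ) : ℂ)] := by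
  ext i; fin_cases i <;> simp [plusVec]

theorem plusVec_two : plusVec 2 = ![1 / ((√2 : ℝ) : ℂ), I / ((√2 : ℝ) : ℂ)] := by
  have : I * 2 * Real.pi / 4 = (Real.pi / 2 : ℝ) * I := by push_cast; ring
  ext i; fin_cases i <;> simp [plusVec, this, exp_mul_I]

theorem cos_sq_pi_div_eight : Real.cos (Real.pi / 8) ^ 2 = (2 + √2) / 4 := by
  rw [Real.cos_pi_div_eight, div_pow, Real.sq_sqrt (by positivity)]
  norm_num

theorem half_projOf_plusVec_add :
    (1 / 2 : ℂ) • (projOf (plusVec 0) + projOf (plusVec 2)) =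
      (((2 + √2) / 4 : ℝ) : ℂ) • 1 - ((√2 / 4 : ℝ) : ℂ) • projOf ![1, -(1 + I) / ((√2 : ℝ) : ℂ)] := by
  have h2 : ((√2 : ℝ) : ℂ) ^ 2 = 2 := by rw [← ofReal_pow, Real.sq_sqrt (by norm_num)]; norm_num
  rw [plusVec_zero, plusVec_two]
  ext i j
  fin_cases i <;> fin_cases j <;>
    simp [projOf, conj_ofReal] <;> field_simp <;> grind [I_sq]

/-- For any single-qubit density operator ρ,
`(1/2)(tr(|+₀⟩⟨+₀|ρ) + tr(|+₂⟩⟨+₂|ρ)) ≤ cos²(π/8)`. -/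
theorem stmt0 (ρ : Matrix (Fin 2) (Fin 2) ℂ) (hρ : ρ.PosSemidef)
    (htr : ρ.trace = 1) :
    (1 / 2 : ℝ) * ((Matrix.trace (projOf (plusVec 0) * ρ)).re
      + (Matrix.trace (projOf (plusVec 2) * ρ)).re)
      ≤ Real.cos (Real.pi / 8) ^ 2 := by
  have hmix : (1 / 2 : ℝ) * ((projOf (plusVec 0) * ρ).trace.re
      + (projOf (plusVec 2) * ρ).trace.re)
      = (((1 / 2 : ℂ) • (projOf (plusVec 0) + projOf (plusVec 2))) * ρ).trace.re := by
    simp [add_mul, trace_add, trace_smul, mul_add]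
  rw [hmix, cos_sq_pi_div_eight]
  exact re_trace_mul_le_of_eq_smul_one_sub hρ htr (by positivity) _ half_projOf_plusVec_add
end

section
/- Let u, v be unit vectors in a finite-dimensional complex inner product space, and let Pᵤ, Pᵥ be the orthogonal projections onto their spans. Then for any density operator ρ, tr((Pᵤ + Pᵥ)ρ) ≤ 1 + |⟨u,v⟩|. -/
open scoped Matrix ComplexOrder InnerProductSpace

/-- Rank-one projection `|u⟩⟨v|` as a matrix. -/
noncomputable def outerE {n : ℕ} (u v : EuclideanSpace ℂ (Fin n)) :
    Matrix (Fin n) (Fin n) ℂ :=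
  fun i j => u i * (starRingEnd ℂ) (v j)

/-!
The operator `(1 + |⟨u,v⟩|) • 1 - Pᵤ - Pᵥ` is positive. For its quadratic form at `x`, put
`a = ⟨u,x⟩`, `b = ⟨v,x⟩` and `z = a u + b v`: then `|a|² + |b|² = ⟨z,x⟩ ≤ ‖z‖ ‖x‖`, while
`‖z‖² ≤ (|a|² + |b|²)(1 + |⟨u,v⟩|)` because `2 |a| |b| ≤ |a|² + |b|²`; together they give
`|a|² + |b|² ≤ (1 + |⟨u,v⟩|) ‖x‖²`. Pairing a positive semidefinite matrix with a density
matrix `ρ = C* C` gives a nonnegative trace, since `tr (A C* C) = tr (C A C*)`.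
-/

open InnerProductSpace

section InnerProductSpace

variable {𝕜 E : Type*} [RCLike 𝕜] [NormedAddCommGroup E] [InnerProductSpace 𝕜 E]

theorem norm_smul_add_smul_sq_le {u v : E} (hu : ‖u‖ = 1) (hv : ‖v‖ = 1) (a b : 𝕜) :
    ‖a • u + b • v‖ ^ 2 ≤ (‖a‖ ^ 2 + ‖b‖ ^ 2) * (1 + ‖⟪u, v⟫_𝕜‖) := by
  have hcross : RCLike.re ⟪a • u, b • v⟫_𝕜 ≤ ‖a‖ * ‖b‖ * ‖⟪u, v⟫_𝕜‖ :=
    calc RCLike.re ⟪a • u, b • v⟫_𝕜 ≤ ‖⟪a • u, b • v⟫_𝕜‖ := RCLike.re_le_norm _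
      _ = ‖a‖ * ‖b‖ * ‖⟪u, v⟫_𝕜‖ := by
        rw [inner_smul_left, inner_smul_right, norm_mul, norm_mul, RCLike.norm_conj, mul_assoc]
  have hamgm : 2 * ‖a‖ * ‖b‖ ≤ ‖a‖ ^ 2 + ‖b‖ ^ 2 := by nlinarith [sq_nonneg (‖a‖ - ‖b‖)]
  rw [norm_add_sq (𝕜 := 𝕜), norm_smul, norm_smul, hu, hv]
  nlinarith [norm_nonneg ⟪u, v⟫_𝕜]

theorem sq_norm_inner_add_sq_norm_inner_le {u v : E} (hu : ‖u‖ = 1) (hv : ‖v‖ = 1) (x : E) :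
    ‖⟪u, x⟫_𝕜‖ ^ 2 + ‖⟪v, x⟫_𝕜‖ ^ 2 ≤ (1 + ‖⟪u, v⟫_𝕜‖) * ‖x‖ ^ 2 := by
  set t := ‖⟪u, x⟫_𝕜‖ ^ 2 + ‖⟪v, x⟫_𝕜‖ ^ 2
  set z := ⟪u, x⟫_𝕜 • u + ⟪v, x⟫_𝕜 • v
  have hzx : ⟪z, x⟫_𝕜 = t := by
    rw [inner_add_left, inner_smul_left, inner_smul_left, RCLike.conj_mul, RCLike.conj_mul]
    norm_cast
  have hCS : t ≤ ‖z‖ * ‖x‖ := by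
    simpa [hzx, abs_of_nonneg (by positivity : 0 ≤ t)] using norm_inner_le_norm (𝕜 := 𝕜) z x
  have hz : ‖z‖ ^ 2 ≤ t * (1 + ‖⟪u, v⟫_𝕜‖) := norm_smul_add_smul_sq_le hu hv _ _
  rcases (by positivity : 0 ≤ t).eq_or_lt with ht | ht
  · rw [← ht]; positivity
  · refine le_of_mul_le_mul_left ?_ ht
    calc t * t ≤ (‖z‖ * ‖x‖) ^ 2 := by nlinarith
      _ = ‖z‖ ^ 2 * ‖x‖ ^ 2 := mul_pow _ _ _
      _ ≤ t * (1 + ‖⟪u, v⟫_𝕜‖) * ‖x‖ ^ 2 := by gcongr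
      _ = t * ((1 + ‖⟪u, v⟫_𝕜‖) * ‖x‖ ^ 2) := mul_assoc _ _ _

theorem isPositive_smul_one_sub_rankOne_sub_rankOne {u v : E} (hu : ‖u‖ = 1) (hv : ‖v‖ = 1) :
    (((1 + ‖⟪u, v⟫_𝕜‖ : ℝ) : 𝕜) • (1 : E →L[𝕜] E) - rankOne 𝕜 u u - rankOne 𝕜 v v).IsPositive := by
  rw [ContinuousLinearMap.isPositive_iff]
  refine ⟨?_, fun x => ?_⟩
  · refine .sub (.sub ?_ (isSymmetric_rankOne_self u)) (isSymmetric_rankOne_self v)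
    exact LinearMap.IsSymmetric.id.smul (RCLike.conj_ofReal _)
  · have hquad :
        ⟪(((1 + ‖⟪u, v⟫_𝕜‖ : ℝ) : 𝕜) • (1 : E →L[𝕜] E) - rankOne 𝕜 u u - rankOne 𝕜 v v) x, x⟫_𝕜
          = (((1 + ‖⟪u, v⟫_𝕜‖) * ‖x‖ ^ 2 - (‖⟪u, x⟫_𝕜‖ ^ 2 + ‖⟪v, x⟫_𝕜‖ ^ 2) : ℝ) : 𝕜) := by
      simp only [sub_apply, smul_apply, one_apply_eq_self, rankOne_apply, inner_sub_left,
        inner_smul_left, RCLike.conj_ofReal, RCLike.conj_mul, inner_self_eq_norm_sq_to_K]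
      push_cast
      ring
    rw [hquad, RCLike.ofReal_nonneg, sub_nonneg]
    exact sq_norm_inner_add_sq_norm_inner_le hu hv x

end InnerProductSpace

theorem Matrix.PosSemidef.trace_mul_nonneg {n 𝕜 : Type*} [Fintype n] [RCLike 𝕜]
    {A B : Matrix n n 𝕜} (hA : A.PosSemidef) (hB : B.PosSemidef) : 0 ≤ (A * B).trace := by
  classical
  open scoped MatrixOrder in
  obtain ⟨C, rfl⟩ := CStarAlgebra.nonneg_iff_eq_star_mul_self.mp hB.nonneg
  rw [star_eq_conjTranspose, ← Matrix.mul_assoc, trace_mul_cycle]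
  exact (hA.mul_mul_conjTranspose_same C).trace_nonneg

theorem outerE_eq_toEuclideanLin_symm_rankOne {n : ℕ} (u v : EuclideanSpace ℂ (Fin n)) :
    outerE u v = Matrix.toEuclideanLin.symm (rankOne ℂ u v) := by
  rw [symm_toEuclideanLin_rankOne]
  rfl

theorem posSemidef_smul_one_sub_outerE_sub_outerE {n : ℕ} {u v : EuclideanSpace ℂ (Fin n)}
    (hu : ‖u‖ = 1) (hv : ‖v‖ = 1) :
    (((1 + ‖⟪u, v⟫_ℂ‖ : ℝ) : ℂ) • (1 : Matrix (Fin n) (Fin n) ℂ)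
      - outerE u u - outerE v v).PosSemidef := by
  rw [← Matrix.isPositive_toEuclideanLin_iff, outerE_eq_toEuclideanLin_symm_rankOne,
    outerE_eq_toEuclideanLin_symm_rankOne, map_sub, map_sub, map_smul,
    LinearEquiv.apply_symm_apply, LinearEquiv.apply_symm_apply,
    show Matrix.toEuclideanLin (1 : Matrix (Fin n) (Fin n) ℂ) = 1 from Matrix.toLpLin_one 2]
  exact (isPositive_smul_one_sub_rankOne_sub_rankOne hu hv).toLinearMap

/-- For unit vectors u, v with rank-one projections Pᵤ, Pᵥ and any density operator ρ,
`tr((Pᵤ + Pᵥ)ρ) ≤ 1 + |⟨u,v⟩|`. -/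
theorem stmt1 (n : ℕ) (u v : EuclideanSpace ℂ (Fin n))
    (hu : ‖u‖ = 1) (hv : ‖v‖ = 1)
    (ρ : Matrix (Fin n) (Fin n) ℂ) (hρ : ρ.PosSemidef) (htr : ρ.trace = 1) :
    (Matrix.trace ((outerE u u + outerE v v) * ρ)).re
      ≤ 1 + ‖(⟪u, v⟫_ℂ : ℂ)‖ := by
  have hgap := (posSemidef_smul_one_sub_outerE_sub_outerE hu hv).trace_mul_nonneg hρ
  rw [sub_sub, Matrix.sub_mul, Matrix.trace_sub, Matrix.smul_mul, Matrix.one_mul,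
    Matrix.trace_smul, htr, smul_eq_mul, mul_one, sub_nonneg] at hgap
  exact_mod_cast (Complex.le_def.mp hgap).1
end
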